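/- Let ν ≥ 0, s ≥ 0, and let h : ℝ^d → ℂ have Fourier transform ĥ. Then ‖h‖_{F^{s,1}_ν} ≤ 4·‖h‖_{F^{s,1}} + ν⁴·‖h‖_{F^{s+4,1}_ν}, where ‖h‖_{F^{σ,1}_ν} := ∫|ξ|^σ e^{ν|ξ|}|ĥ(ξ)|dξ and ‖h‖_{F^{σ,1}} := ∫|ξ|^σ|ĥ(ξ)|dξ (assume both right-hand-side quantities are finite). -/
import Mathlib


open MeasureTheory Real
open scoped FourierTransform

lemma exp_le_aux (x : ℝ) (hx : 0 ≤ x) : Real.exp x ≤ 4 + x ^ 4 * Real.exp x := by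
  rcases le_total x 1 with hx1 | hx1
  · have h1 : Real.exp x ≤ Real.exp 1 := Real.exp_le_exp.2 hx1
    have h2 : Real.exp 1 < 4 := lt_trans Real.exp_one_lt_d9 (by norm_num)
    nlinarith [pow_nonneg hx 4, Real.exp_pos x]
  · have h1 : (1:ℝ) ≤ x ^ 4 := one_le_pow₀ hx1
    nlinarith [Real.exp_pos x]

lemma key_ptwise (s ν r : ℝ) (hs : 0 ≤ s) (hν : 0 ≤ ν) (hr : 0 ≤ r) :
    r ^ s * Real.exp (ν * r) ≤ 4 * r ^ s + ν ^ 4 * (r ^ (s + 4) * Real.exp (ν * r)) := by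
  rcases eq_or_lt_of_le hr with rfl | hr
  · simp only [mul_zero, Real.exp_zero, mul_one]
    rw [Real.zero_rpow (by linarith : s + 4 ≠ 0)]
    have : (0:ℝ) ≤ (0:ℝ) ^ s := Real.rpow_nonneg le_rfl s
    nlinarith
  · have hsplit : r ^ (s + 4) = r ^ s * r ^ 4 := by
      rw [Real.rpow_add hr]
      congr 1
      rw [show (4:ℝ) = ((4:ℕ):ℝ) by norm_num, Real.rpow_natCast]
    have hkey := exp_le_aux (ν * r) (by positivity)
    have hpow : (ν * r) ^ 4 = ν ^ 4 * r ^ 4 := mul_pow ν r 4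
    have hrs : (0:ℝ) ≤ r ^ s := Real.rpow_nonneg hr.le s
    rw [hsplit]
    nlinarith [Real.exp_pos (ν * r), pow_nonneg hν 4, pow_nonneg hr.le 4,
      mul_nonneg hrs (Real.exp_pos (ν * r)).le]

/-- `‖h‖_{F^{s,1}_ν} ≤ 4‖h‖_{F^{s,1}} + ν⁴‖h‖_{F^{s+4,1}_ν}`. -/
theorem stmt16 (d : ℕ) (s ν : ℝ) (hs : 0 ≤ s) (hν : 0 ≤ ν)
    (h : EuclideanSpace ℝ (Fin d) → ℂ)
    (h1 : Integrable (fun ξ => ‖ξ‖ ^ s * ‖𝓕 h ξ‖) volume)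
    (h2 : Integrable (fun ξ => ‖ξ‖ ^ (s + 4) * Real.exp (ν * ‖ξ‖) * ‖𝓕 h ξ‖) volume) :
    (∫ ξ, ‖ξ‖ ^ s * Real.exp (ν * ‖ξ‖) * ‖𝓕 h ξ‖)
      ≤ 4 * (∫ ξ, ‖ξ‖ ^ s * ‖𝓕 h ξ‖) +
        ν ^ 4 * (∫ ξ, ‖ξ‖ ^ (s + 4) * Real.exp (ν * ‖ξ‖) * ‖𝓕 h ξ‖) := by
  have hG : Integrable (fun ξ : EuclideanSpace ℝ (Fin d) =>
      4 * (‖ξ‖ ^ s * ‖𝓕 h ξ‖) + ν ^ 4 * (‖ξ‖ ^ (s + 4) * Real.exp (ν * ‖ξ‖) * ‖𝓕 h ξ‖)) :=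
    (h1.const_mul 4).add (h2.const_mul (ν ^ 4))
  have hle : ∀ ξ : EuclideanSpace ℝ (Fin d),
      ‖ξ‖ ^ s * Real.exp (ν * ‖ξ‖) * ‖𝓕 h ξ‖
        ≤ 4 * (‖ξ‖ ^ s * ‖𝓕 h ξ‖) + ν ^ 4 * (‖ξ‖ ^ (s + 4) * Real.exp (ν * ‖ξ‖) * ‖𝓕 h ξ‖) := by
    intro ξ
    have := key_ptwise s ν ‖ξ‖ hs hν (norm_nonneg ξ)
    have hn : (0:ℝ) ≤ ‖𝓕 h ξ‖ := norm_nonneg _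
    nlinarith [this, hn]
  have hmeas : AEStronglyMeasurable
      (fun ξ : EuclideanSpace ℝ (Fin d) => ‖ξ‖ ^ s * Real.exp (ν * ‖ξ‖) * ‖𝓕 h ξ‖) volume := by
    have : (fun ξ : EuclideanSpace ℝ (Fin d) => ‖ξ‖ ^ s * Real.exp (ν * ‖ξ‖) * ‖𝓕 h ξ‖)
        = fun ξ => Real.exp (ν * ‖ξ‖) * (‖ξ‖ ^ s * ‖𝓕 h ξ‖) := by
      funext ξ; ring
    rw [this]
    exact (Continuous.aestronglyMeasurable (by continuity)).mul h1.aestronglyMeasurable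
  have hF : Integrable (fun ξ : EuclideanSpace ℝ (Fin d) =>
      ‖ξ‖ ^ s * Real.exp (ν * ‖ξ‖) * ‖𝓕 h ξ‖) := by
    refine hG.mono' hmeas (Filter.Eventually.of_forall fun ξ => ?_)
    rw [Real.norm_of_nonneg (by positivity)]
    exact hle ξ
  calc (∫ ξ, ‖ξ‖ ^ s * Real.exp (ν * ‖ξ‖) * ‖𝓕 h ξ‖)
      ≤ ∫ ξ, (4 * (‖ξ‖ ^ s * ‖𝓕 h ξ‖) + ν ^ 4 * (‖ξ‖ ^ (s + 4) * Real.exp (ν * ‖ξ‖) * ‖𝓕 h ξ‖)) :=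
        integral_mono hF hG hle
    _ = 4 * (∫ ξ, ‖ξ‖ ^ s * ‖𝓕 h ξ‖) +
        ν ^ 4 * (∫ ξ, ‖ξ‖ ^ (s + 4) * Real.exp (ν * ‖ξ‖) * ‖𝓕 h ξ‖) := by
      rw [integral_add (h1.const_mul 4) (h2.const_mul (ν ^ 4)),
        integral_const_mul, integral_const_mul]
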